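/- The Bäcklund transformation s₄ of the D₅⁽²⁾ system, (q,p,t) ↦ (q + 2α₄/p − t/p², p, −t) with parameter change (α₃,α₄) ↦ (α₃+2α₄, −α₄) (other variables and parameters unchanged), maps solutions of the D₅⁽²⁾ system to solutions with the new parameters, wherever p ≠ 0. -/

import Mathlib

/-- The system (41) of type `D₅⁽²⁾` at time `t`. -/
def SolvesD5 (a0 a1 a2 a3 a4 : ℝ) (x y z w q p : ℝ → ℝ) (t : ℝ) : Prop :=
  HasDerivAt x (((x t)^2*(y t) + (z t)^2*(w t) + a0*(x t) + a2*(z t) - p t)/t) t ∧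
  HasDerivAt y ((-2*(x t)*(y t)^2 - 2*a0*(y t) - 1)/(2*t)) t ∧
  HasDerivAt z (((z t)^2*(w t) + (y t)*(z t)^2 + (a0+a1+a2)*(z t) - p t)/t) t ∧
  HasDerivAt w ((-(z t)*(w t)^2 - 2*(y t)*(z t)*(w t) - a2*(y t) - (a0+a1+a2)*(w t))/t) t ∧
  HasDerivAt q (((q t)^2*(p t) - y t - w t + (a4-1)*(q t))/t) t ∧
  HasDerivAt p ((-2*(q t)*(p t)^2 - 2*(a4-1)*(p t) + t)/(2*t)) t

/-- The Bäcklund transformation `s₄` of the `D₅⁽²⁾` system,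
`(q,p,t) ↦ (q + 2α₄/p − t/p², p, −t)` with `(α₃,α₄) ↦ (α₃+2α₄, −α₄)`,
maps solutions (regarded as functions of the new time `T = −t`) to solutions
with the new parameters, wherever `p ≠ 0`. -/
theorem stmt12 (a0 a1 a2 a3 a4 : ℝ)
    (hrel : a0 + a1 + a2 + a3 + a4 = 1)
    (x y z w q p : ℝ → ℝ)
    (hsol : ∀ t : ℝ, t ≠ 0 → SolvesD5 a0 a1 a2 a3 a4 x y z w q p t)
    (hp : ∀ t : ℝ, t ≠ 0 → p t ≠ 0) :
    ∀ s : ℝ, s ≠ 0 →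
      SolvesD5 a0 a1 a2 (a3+2*a4) (-a4)
        (fun u => x (-u)) (fun u => y (-u)) (fun u => z (-u)) (fun u => w (-u))
        (fun u => q (-u) + 2*a4/(p (-u)) - (-u)/(p (-u))^2) (fun u => p (-u)) s := by
  intro s hs
  have ht : (-s) ≠ 0 := neg_ne_zero.mpr hs
  obtain ⟨hx, hy, hz, hw, hq, hpd⟩ := hsol (-s) ht
  have hps : p (-s) ≠ 0 := hp (-s) ht
  have hneg : HasDerivAt (fun u : ℝ => -u) (-1) s := (hasDerivAt_id s).neg
  have hx' := hx.comp s hneg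
  have hy' := hy.comp s hneg
  have hz' := hz.comp s hneg
  have hw' := hw.comp s hneg
  have hq' := hq.comp s hneg
  have hp' := hpd.comp s hneg
  refine ⟨hx'.congr_deriv ?_, hy'.congr_deriv ?_, hz'.congr_deriv ?_, hw'.congr_deriv ?_,
    ?_, hp'.congr_deriv ?_⟩
  · field_simp
  · field_simp
  · field_simp
  · field_simp
  · have h1 : HasDerivAt (fun u => 2*a4/(p (-u)))
        (-(2*a4 * ((-2*(q (-s))*(p (-s))^2 - 2*(a4-1)*(p (-s)) + (-s))/(2*(-s)) * -1)) /
          (p (-s))^2) s := by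
      exact ((hasDerivAt_const s (2*a4)).div hp' hps).congr_deriv (by simp only [Function.comp_apply]; ring)
    have h2 : HasDerivAt (fun u : ℝ => (-u)/(p (-u))^2)
        (((-1) * (p (-s))^2 - (-s) * (2 * (p (-s))^1 *
          ((-2*(q (-s))*(p (-s))^2 - 2*(a4-1)*(p (-s)) + (-s))/(2*(-s)) * -1))) /
          ((p (-s))^2)^2) s := by
      exact hneg.div (hp'.pow 2) (pow_ne_zero 2 hps)
    have := (hq'.add h1).sub h2
    refine this.congr_deriv ?_
    field_simp
    ring
  · field_simp
    ring
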